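/- arXiv:1605.06373 — 2 statements merged into one kernel-verified Lean document; each statement's English description precedes it below -/
import Mathlib

section
/- (Change of variables relating the two forms of the Caffarelli–Kohn–Nirenberg inequality) Let d ≥ 2, let γ < d and let β be such that β + 2 − γ > 0. Set α := 1 + (β-γ)/2 and n := 2(d-γ)/(β+2-γ). Let w : ℝ^d → ℝ be measurable and define v(x) := w(|x|^{1/α - 1} x) for x ≠ 0. Then: (i) for every q > 0, ∫_{ℝ^d} |w(x)|^q |x|^{-γ} dx = α^{-1} ∫_{ℝ^d} |v(x)|^q |x|^{n-d} dx (as an identity in [0,∞]); and (ii) if moreover w is C¹ on ℝ^d \ {0}, then ∫_{ℝ^d} |∇w(x)|² |x|^{-β} dx = α^{-1} ∫_{ℝ^d} |D_α v(x)|² |x|^{n-d} dx, where D_α v(x) := ∇v(x) + (α-1)((x·∇v(x))/|x|²)x. -/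
open MeasureTheory Real Filter Set
open scoped RealInnerProductSpace

noncomputable section

/-- Euclidean space `ℝ^d`. -/
abbrev Esp (d : ℕ) := EuclideanSpace ℝ (Fin d)

/-- The anisotropic gradient `D_α v(x) = ∇v(x) + (α-1)((x·∇v(x))/|x|²) x`. -/
def Dalpha (d : ℕ) (α : ℝ) (v : Esp d → ℝ) (x : Esp d) : Esp d :=
  gradient v x + ((α - 1) * (⟪x, gradient v x⟫ / ‖x‖^2)) • x

/-- Weighted norm `‖v‖_{q,d-n} = (∫ |v|^q |x|^{n-d} dx)^{1/q}`. -/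
def nnorm (d : ℕ) (q n : ℝ) (v : Esp d → ℝ) : ℝ :=
  (∫ x : Esp d, |v x| ^ q * ‖x‖ ^ (n - (d:ℝ))) ^ (1/q)

/-- Weighted norm `‖D_α v‖_{2,d-n} = (∫ |D_α v|² |x|^{n-d} dx)^{1/2}`. -/
def Dnorm (d : ℕ) (α n : ℝ) (v : Esp d → ℝ) : ℝ :=
  (∫ x : Esp d, ‖Dalpha d α v x‖ ^ (2:ℝ) * ‖x‖ ^ (n - (d:ℝ))) ^ ((1:ℝ)/2)

/-- The interpolation exponent `θ = n(p-1)/(p(n+2-p(n-2)))`. -/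
def thetaN (n p : ℝ) : ℝ := n * (p - 1) / (p * (n + 2 - p * (n - 2)))

/-- The radial function `v⋆(x) = (1+|x|²)^{-1/(p-1)}`. -/
def vstar (d : ℕ) (p : ℝ) : Esp d → ℝ :=
  fun x => (1 + ‖x‖^2) ^ (-(1/(p-1)))

/-- The value of the quotient at `v⋆`. -/
def Kstar (d : ℕ) (α n p : ℝ) : ℝ :=
  nnorm d (2*p) n (vstar d p) /
    (Dnorm d α n (vstar d p) ^ thetaN n p *
      nnorm d (p+1) n (vstar d p) ^ (1 - thetaN n p))

/-- The weight `μ_δ(x) = (1+|x|²)^{-δ}`. -/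
def muW (d : ℕ) (δ : ℝ) (x : Esp d) : ℝ := (1 + ‖x‖^2) ^ (-δ)

/-! The substitution `y = ‖x‖^c • x`, `c = 1/α - 1`, is a diffeomorphism of `ℝ^d ∖ {0}` preserving
rays. Its differential `‖x‖^c (I + c x xᵀ/‖x‖²)` is self-adjoint, stretches the radial direction by
`1 + c = α⁻¹` relative to the tangential ones, and has Jacobian `α⁻¹ ‖x‖^{cd}`. Substituting in both
integrals, (i) is a matter of matching the powers of `‖x‖`. For (ii), the chain rule gives
`∇v(x) = ‖x‖^c (I + c x xᵀ/‖x‖²) ∇w(y)`, and `D_α` is exactly the correction undoing the radial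
stretch: `D_α v(x) = ‖x‖^c ∇w(y)`. -/

theorem LinearMap.det_id_add_smulRight {R M : Type*} [CommRing R] [AddCommGroup M] [Module R M]
    [Module.Free R M] [Module.Finite R M] (f : M →ₗ[R] R) (v : M) :
    LinearMap.det (LinearMap.id + f.smulRight v) = 1 + f v := by
  let b := Module.Free.chooseBasis R M
  have hM : LinearMap.toMatrix b b (LinearMap.id + f.smulRight v) =
      1 + Matrix.replicateCol Unit (b.repr v) * Matrix.replicateRow Unit (fun i => f (b i)) := by
    ext i j
    simp [LinearMap.toMatrix_apply, Matrix.one_apply, Matrix.mul_apply, Finsupp.single_apply,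
      eq_comm, mul_comm]
  rw [← LinearMap.det_toMatrix b, hM, Matrix.det_one_add_replicateCol_mul_replicateRow]
  congr 1
  conv_rhs => rw [← b.sum_repr v]
  simp only [map_sum, map_smul, smul_eq_mul, dotProduct, mul_comm]

theorem HasGradientAt.comp_of_isSymmetric {E : Type*} [NormedAddCommGroup E]
    [InnerProductSpace ℝ E] [CompleteSpace E] {f : E → ℝ} {g x : E} {T : E → E} {L : E →L[ℝ] E}
    (hf : HasGradientAt f g (T x)) (hT : HasFDerivAt T L x) (hL : (L : E →ₗ[ℝ] E).IsSymmetric) :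
    HasGradientAt (f ∘ T) (L g) x := by
  rw [hasGradientAt_iff_hasFDerivAt] at hf ⊢
  refine (hf.comp x hT).congr_fderiv ?_
  ext u
  simpa using (hL g u).symm

section RadialPow

variable {E : Type*} [NormedAddCommGroup E] [InnerProductSpace ℝ E]

theorem hasFDerivAt_norm_rpow_of_ne_zero {x : E} (hx : x ≠ 0) (c : ℝ) :
    HasFDerivAt (fun y : E => ‖y‖ ^ c) ((c * ‖x‖ ^ (c - 2)) • innerSL ℝ x) x := by
  have hpos : 0 < ‖x‖ := norm_pos_iff.2 hx
  convert (hasFDerivAt_id x).norm_sq.rpow_const (p := c / 2) (Or.inl (by positivity)) using 1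
  · ext y
    rw [id, ← rpow_two, ← rpow_mul (norm_nonneg y)]
    ring_nf
  · have hexp : (‖x‖ ^ 2) ^ (c / 2 - 1) = ‖x‖ ^ (c - 2) := by
      rw [← rpow_two, ← rpow_mul (norm_nonneg x)]
      ring_nf
    ext h
    simp [hexp]
    ring

def radialPow (c : ℝ) (x : E) : E := ‖x‖ ^ c • x

def radialPowDeriv (c : ℝ) (x : E) : E →L[ℝ] E :=
  ‖x‖ ^ c • ContinuousLinearMap.id ℝ E + ((c * ‖x‖ ^ (c - 2)) • innerSL ℝ x).smulRight x

theorem radialPowDeriv_apply (c : ℝ) (x u : E) :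
    radialPowDeriv c x u = ‖x‖ ^ c • u + (c * ‖x‖ ^ (c - 2) * ⟪x, u⟫) • x := by
  simp [radialPowDeriv]

theorem hasFDerivAt_radialPow {x : E} (hx : x ≠ 0) (c : ℝ) :
    HasFDerivAt (radialPow c) (radialPowDeriv c x) x :=
  (hasFDerivAt_norm_rpow_of_ne_zero hx c).smul (hasFDerivAt_id x)

theorem isSymmetric_radialPowDeriv (c : ℝ) (x : E) :
    (radialPowDeriv c x : E →ₗ[ℝ] E).IsSymmetric := fun u v => by
  simp only [ContinuousLinearMap.coe_coe, radialPowDeriv_apply, inner_add_left, inner_add_right,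
    real_inner_smul_left, real_inner_smul_right, real_inner_comm u x, real_inner_comm v x]
  ring

theorem inner_self_radialPowDeriv {x : E} (hx : x ≠ 0) (c : ℝ) (u : E) :
    ⟪x, radialPowDeriv c x u⟫ = (1 + c) * ‖x‖ ^ c * ⟪x, u⟫ := by
  have hpos : 0 < ‖x‖ := norm_pos_iff.2 hx
  rw [radialPowDeriv_apply, inner_add_right, real_inner_smul_right, real_inner_smul_right,
    real_inner_self_eq_norm_sq, rpow_sub hpos, rpow_two]
  field_simp

theorem det_radialPowDeriv [FiniteDimensional ℝ E] {x : E} (hx : x ≠ 0) (c : ℝ) :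
    (radialPowDeriv c x).det = (1 + c) * ‖x‖ ^ (c * Module.finrank ℝ E) := by
  have hpos : 0 < ‖x‖ := norm_pos_iff.2 hx
  have hfac : (radialPowDeriv c x : E →ₗ[ℝ] E) = ‖x‖ ^ c •
      (LinearMap.id + (((c / ‖x‖ ^ 2) • innerSL ℝ x : E →L[ℝ] ℝ) : E →ₗ[ℝ] ℝ).smulRight x) := by
    ext u
    simp [radialPowDeriv_apply, smul_smul, rpow_sub hpos]
    ring_nf
  rw [ContinuousLinearMap.det, hfac, LinearMap.det_smul, LinearMap.det_id_add_smulRight]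
  simp only [ContinuousLinearMap.coe_coe, smul_apply, innerSL_apply_apply,
    real_inner_self_eq_norm_sq, smul_eq_mul]
  rw [div_mul_cancel₀ _ (by positivity), rpow_mul (norm_nonneg x), rpow_natCast]
  ring

theorem norm_radialPow {x : E} (hx : x ≠ 0) (c : ℝ) : ‖radialPow c x‖ = ‖x‖ ^ (c + 1) := by
  rw [radialPow, norm_smul, norm_of_nonneg (by positivity), rpow_add_one (norm_ne_zero_iff.2 hx)]

theorem radialPow_ne_zero {x : E} (hx : x ≠ 0) (c : ℝ) : radialPow c x ≠ 0 := by
  rw [← norm_ne_zero_iff, norm_radialPow hx]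
  exact (rpow_pos_of_pos (norm_pos_iff.2 hx) _).ne'

theorem radialPow_radialPow {x : E} (hx : x ≠ 0) (c c' : ℝ) :
    radialPow c' (radialPow c x) = radialPow ((c + 1) * (c' + 1) - 1) x := by
  rw [radialPow, norm_radialPow hx, radialPow, smul_smul, ← rpow_mul (norm_nonneg x),
    ← rpow_add (norm_pos_iff.2 hx), radialPow]
  ring_nf

theorem bijOn_radialPow {c : ℝ} (hc : c ≠ -1) : BijOn (radialPow c) {(0 : E)}ᶜ {0}ᶜ := by
  have hc' : c + 1 ≠ 0 := by contrapose! hc; linarith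
  have hinv : ∀ c c' : ℝ, (c + 1) * (c' + 1) = 1 →
      LeftInvOn (radialPow c') (radialPow c) {(0 : E)}ᶜ :=
    fun c c' h x hx => by rw [radialPow_radialPow hx, h, sub_self, radialPow, rpow_zero, one_smul]
  refine InvOn.bijOn (f' := radialPow ((c + 1)⁻¹ - 1)) ⟨hinv _ _ ?_, hinv _ _ ?_⟩
    (fun x hx => radialPow_ne_zero hx _) (fun x hx => radialPow_ne_zero hx _) <;>
    field_simp <;> ring

theorem lintegral_eq_lintegral_comp_radialPow [FiniteDimensional ℝ E] [Nontrivial E]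
    [MeasurableSpace E] [BorelSpace E] (μ : Measure E) [μ.IsAddHaarMeasure] {c : ℝ} (hc : c ≠ -1)
    (g : E → ENNReal) :
    ∫⁻ y, g y ∂μ =
      ∫⁻ x, ENNReal.ofReal (|1 + c| * ‖x‖ ^ (c * Module.finrank ℝ E)) * g (radialPow c x) ∂μ := by
  have hbij := bijOn_radialPow (E := E) hc
  have hs : MeasurableSet ({0}ᶜ : Set E) := (measurableSet_singleton 0).compl
  calc ∫⁻ y, g y ∂μ = ∫⁻ y in radialPow c '' {0}ᶜ, g y ∂μ := by
        rw [hbij.image_eq, restrict_compl_singleton]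
    _ = ∫⁻ x in {0}ᶜ, ENNReal.ofReal |(radialPowDeriv c x).det| * g (radialPow c x) ∂μ :=
        lintegral_image_eq_lintegral_abs_det_fderiv_mul μ hs
          (fun x hx => (hasFDerivAt_radialPow hx c).hasFDerivWithinAt) hbij.injOn g
    _ = _ := by
        rw [setLIntegral_congr_fun hs fun x hx => by
          rw [det_radialPowDeriv hx, abs_mul, abs_of_pos (rpow_pos_of_pos (norm_pos_iff.2 hx) _)],
          restrict_compl_singleton]

theorem lintegral_mul_norm_rpow_eq_lintegral_comp_radialPow [FiniteDimensional ℝ E] [Nontrivial E]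
    [MeasurableSpace E] [BorelSpace E] (μ : Measure E) [μ.IsAddHaarMeasure] {c : ℝ} (hc : c ≠ -1)
    (f : E → ℝ) (s : ℝ) :
    ∫⁻ y, ENNReal.ofReal (f y * ‖y‖ ^ s) ∂μ = ENNReal.ofReal |1 + c| *
      ∫⁻ x, ENNReal.ofReal (f (radialPow c x) * ‖x‖ ^ (c * Module.finrank ℝ E + (c + 1) * s)) ∂μ := by
  rw [lintegral_eq_lintegral_comp_radialPow μ hc, ← lintegral_const_mul' _ _ ENNReal.ofReal_ne_top]
  refine lintegral_congr_ae ((μ.ae_ne 0).mono fun x hx => ?_)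
  dsimp only
  rw [← ENNReal.ofReal_mul (by positivity), ← ENNReal.ofReal_mul (by positivity),
    norm_radialPow hx, ← rpow_mul (norm_nonneg x), rpow_add (norm_pos_iff.2 hx)]
  ring_nf

end RadialPow

theorem Dalpha_comp_radialPow {d : ℕ} {α c : ℝ} (hcα : α * (1 + c) = 1) {w : Esp d → ℝ}
    {x : Esp d} (hx : x ≠ 0) (hw : DifferentiableAt ℝ w (radialPow c x)) :
    Dalpha d α (w ∘ radialPow c) x = ‖x‖ ^ c • gradient w (radialPow c x) := by
  have hpos : 0 < ‖x‖ := norm_pos_iff.2 hx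
  have hgrad : gradient (w ∘ radialPow c) x = radialPowDeriv c x (gradient w (radialPow c x)) :=
    (hw.hasGradientAt.comp_of_isSymmetric (hasFDerivAt_radialPow hx c)
      (isSymmetric_radialPowDeriv c x)).gradient
  set t := ⟪x, gradient w (radialPow c x)⟫
  have hcoef : c * ‖x‖ ^ (c - 2) * t + (α - 1) * ((1 + c) * ‖x‖ ^ c * t / ‖x‖ ^ 2) = 0 := by
    rw [rpow_sub hpos, rpow_two]
    linear_combination (‖x‖ ^ c * t / ‖x‖ ^ 2) * hcα
  rw [Dalpha, hgrad, inner_self_radialPowDeriv hx, radialPowDeriv_apply, add_assoc, ← add_smul,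
    hcoef, zero_smul, add_zero]

theorem CKN_change_of_variables_general
    (d : ℕ) (hd : 2 ≤ d) (β γ α n : ℝ)
    (hβγ : 0 < β + 2 - γ)
    (hα : α = 1 + (β - γ)/2) (hn : n = 2*((d:ℝ) - γ)/(β + 2 - γ))
    (w : Esp d → ℝ)
    (v : Esp d → ℝ) (hv : ∀ x : Esp d, v x = w (‖x‖ ^ (1/α - 1) • x)) :
    (∀ q : ℝ, 0 < q →
      ∫⁻ x : Esp d, ENNReal.ofReal (|w x| ^ q * ‖x‖ ^ (-γ)) =
        ENNReal.ofReal α⁻¹ *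
          ∫⁻ x : Esp d, ENNReal.ofReal (|v x| ^ q * ‖x‖ ^ (n - (d:ℝ))))
    ∧
    (ContDiffOn ℝ 1 w {(0 : Esp d)}ᶜ →
      ∫⁻ x : Esp d, ENNReal.ofReal (‖gradient w x‖ ^ 2 * ‖x‖ ^ (-β)) =
        ENNReal.ofReal α⁻¹ *
          ∫⁻ x : Esp d, ENNReal.ofReal (‖Dalpha d α v x‖ ^ 2 * ‖x‖ ^ (n - (d:ℝ)))) := by
  have hα0 : 0 < α := by rw [hα]; linarith
  set c := 1 / α - 1 with hc
  have hc1 : 1 + c = α⁻¹ := by rw [hc]; ring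
  have hcα : α * (1 + c) = 1 := by rw [hc1, mul_inv_cancel₀ hα0.ne']
  have hnα : n = (d - γ) / α := by rw [hn, hα, div_eq_div_iff hβγ.ne' (by linarith)]; ring
  have : Nonempty (Fin d) := ⟨⟨0, by omega⟩⟩
  have hcov := lintegral_mul_norm_rpow_eq_lintegral_comp_radialPow (volume : Measure (Esp d))
    (c := c) (fun h => by linarith [inv_pos.2 hα0])
  rw [finrank_euclideanSpace_fin, hc1, abs_of_pos (inv_pos.2 hα0)] at hcov
  have hv' : v = w ∘ radialPow c := funext hv
  refine ⟨fun q _ => ?_, fun hw => ?_⟩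
  · have hexp : c * d + (c + 1) * -γ = n - d := by rw [hc, hnα]; field_simp; ring
    rw [hcov, hexp, hv']
    rfl
  · have hexp : c * d + (c + 1) * -β = 2 * c + (n - d) := by
      rw [hc, hnα, show β = 2 * α - 2 + γ by rw [hα]; ring]; field_simp; ring
    rw [hcov, hexp]
    congr 1
    refine lintegral_congr_ae ((volume.ae_ne 0).mono fun x hx => ?_)
    have hdiff : DifferentiableAt ℝ w (radialPow c x) :=
      (hw.contDiffAt (isOpen_compl_singleton.mem_nhds (radialPow_ne_zero hx c))).differentiableAt
        one_ne_zero
    dsimp only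
    rw [hv', Dalpha_comp_radialPow hcα hx hdiff, norm_smul, norm_of_nonneg (by positivity),
      rpow_add (norm_pos_iff.2 hx), mul_pow, ← rpow_natCast (‖x‖ ^ c), ← rpow_mul (norm_nonneg x)]
    ring_nf

/-- Change of variables `v(x) = w(|x|^{1/α-1} x)` relating the two
forms of the Caffarelli–Kohn–Nirenberg inequality: (i) weighted Lebesgue
integrals transform with factor `α⁻¹`; (ii) likewise for gradient integrals,
with `∇w` replaced by `D_α v`. -/
theorem CKN_change_of_variables
    (d : ℕ) (hd : 2 ≤ d) (β γ α n : ℝ)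
    (hγd : γ < (d:ℝ)) (hβγ : 0 < β + 2 - γ)
    (hα : α = 1 + (β - γ)/2) (hn : n = 2*((d:ℝ) - γ)/(β + 2 - γ))
    (w : Esp d → ℝ) (hw : Measurable w)
    (v : Esp d → ℝ) (hv : ∀ x : Esp d, v x = w (‖x‖ ^ (1/α - 1) • x)) :
    (∀ q : ℝ, 0 < q →
      ∫⁻ x : Esp d, ENNReal.ofReal (|w x| ^ q * ‖x‖ ^ (-γ)) =
        ENNReal.ofReal α⁻¹ *
          ∫⁻ x : Esp d, ENNReal.ofReal (|v x| ^ q * ‖x‖ ^ (n - (d:ℝ))))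
    ∧
    (ContDiffOn ℝ 1 w {(0 : Esp d)}ᶜ →
      ∫⁻ x : Esp d, ENNReal.ofReal (‖gradient w x‖ ^ 2 * ‖x‖ ^ (-β)) =
        ENNReal.ofReal α⁻¹ *
          ∫⁻ x : Esp d, ENNReal.ofReal (‖Dalpha d α v x‖ ^ 2 * ‖x‖ ^ (n - (d:ℝ)))) :=
  CKN_change_of_variables_general d hd β γ α n hβγ hα hn w v hv
end
end

section
/- (Circle inequality with quartic remainder) Let ν > 2 be a real number and let P : ℝ → (0,∞) be a C³ function which is 2π-periodic. Then ∫₀^{2π} |P''(θ)|² P(θ)^{1-ν} dθ ≥ ∫₀^{2π} |P'(θ)|² P(θ)^{1-ν} dθ + ((ν-1)(ν+3)/12) ∫₀^{2π} (|P'(θ)|⁴ / P(θ)²) P(θ)^{1-ν} dθ. -/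
/-! Put `f = P ^ ((1 - ν) / 2) * P'`, so that `f ^ 2 = P' ^ 2 * P ^ (1 - ν)`. Over a period `f` has
mean zero (substitute `u = P θ`), so Wirtinger's inequality `∫ f ^ 2 ≤ ∫ f' ^ 2` holds; it follows
from Parseval, since the `n`-th Fourier coefficient of `f` is that of `f'` divided by `i n`.
Expanding `f' ^ 2`, the cross term `∫ P' ^ 2 * P'' * P ^ (-ν)` is turned into a multiple of
`∫ P' ^ 4 * P ^ (-1 - ν)` by integrating `(P' ^ 3 * P ^ (-ν))'` over a period, and what remains is
the quartic remainder. -/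

open Real intervalIntegral

noncomputable section

open Set

open MeasureTheory in
theorem ContinuousOn.memLp_two_restrict_Ioc {E : Type*} [NormedAddCommGroup E] {a b : ℝ}
    {f : ℝ → E} (hf : ContinuousOn f (Icc a b)) : MemLp f 2 (volume.restrict (Ioc a b)) := by
  have hmeas : AEStronglyMeasurable f (volume.restrict (Ioc a b)) :=
    (hf.mono Ioc_subset_Icc_self).aestronglyMeasurable measurableSet_Ioc
  refine (memLp_two_iff_integrable_sq_norm hmeas).2 ?_
  exact ((hf.norm.pow 2).integrableOn_Icc).mono_set Ioc_subset_Icc_self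

open Complex MeasureTheory in
theorem norm_fourierCoeffOn_le_of_hasDerivAt {a b : ℝ} (hab : a < b) {f f' : ℝ → ℂ}
    (hf : ∀ x ∈ uIcc a b, HasDerivAt f (f' x) x) (hf' : IntervalIntegrable f' volume a b)
    (hfab : f a = f b) (hmean : ∫ x in a..b, f x = 0) (n : ℤ) :
    ‖fourierCoeffOn hab f n‖ ≤ (b - a) / (2 * π) * ‖fourierCoeffOn hab f' n‖ := by
  rcases eq_or_ne n 0 with rfl | hn
  · simp only [fourierCoeffOn_eq_integral, neg_zero, fourier_zero, one_smul, hmean, smul_zero,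
      norm_zero]
    positivity
  · rw [fourierCoeffOn_of_hasDerivAt hab hn hf hf', hfab, sub_self, mul_zero, zero_sub]
    have hn1 : (1 : ℝ) ≤ |(n : ℝ)| := by exact_mod_cast Int.one_le_abs hn
    have hba : 0 < b - a := sub_pos.2 hab
    have hnorm : ‖(1 : ℂ) / (-2 * π * I * n)‖ = 1 / (2 * π * |(n : ℝ)|) := by
      simp [abs_of_pos pi_pos]
    have hba' : ‖((b : ℂ) - a)‖ = b - a := by
      rw [← ofReal_sub, Complex.norm_real, Real.norm_of_nonneg hba.le]
    rw [norm_mul, norm_neg, norm_mul, hnorm, hba',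
      show 1 / (2 * π * |(n : ℝ)|) * ((b - a) * ‖fourierCoeffOn hab f' n‖)
        = (b - a) / (2 * π) * ‖fourierCoeffOn hab f' n‖ / |(n : ℝ)| by field_simp]
    exact div_le_self (by positivity) hn1

theorem integral_norm_sq_le_integral_norm_deriv_sq {a b : ℝ} (hab : a < b) {f f' : ℝ → ℂ}
    (hf : ∀ x ∈ uIcc a b, HasDerivAt f (f' x) x) (hf' : ContinuousOn f' (uIcc a b))
    (hfab : f a = f b) (hmean : ∫ x in a..b, f x = 0) :
    ∫ x in a..b, ‖f x‖ ^ 2 ≤ ((b - a) / (2 * π)) ^ 2 * ∫ x in a..b, ‖f' x‖ ^ 2 := by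
  rw [uIcc_of_le hab.le] at hf hf'
  have hfc : ContinuousOn f (Icc a b) := fun x hx => (hf x hx).continuousAt.continuousWithinAt
  have hparseval := hasSum_sq_fourierCoeffOn hab hfc.memLp_two_restrict_Ioc
  have hparseval' := hasSum_sq_fourierCoeffOn hab hf'.memLp_two_restrict_Ioc
  have hcoeff (n : ℤ) : ‖fourierCoeffOn hab f n‖ ^ 2
      ≤ ((b - a) / (2 * π)) ^ 2 * ‖fourierCoeffOn hab f' n‖ ^ 2 := by
    rw [← mul_pow]
    exact pow_le_pow_left₀ (norm_nonneg _) (norm_fourierCoeffOn_le_of_hasDerivAt hab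
      (by rwa [uIcc_of_le hab.le]) (hf'.intervalIntegrable_of_Icc hab.le) hfab hmean n) 2
  have hle := hasSum_le hcoeff hparseval (hparseval'.mul_left _)
  rw [smul_eq_mul, smul_eq_mul, mul_left_comm] at hle
  exact le_of_mul_le_mul_left hle (inv_pos.2 (sub_pos.2 hab))

theorem integral_sq_le_integral_deriv_sq {a b : ℝ} (hab : a < b) {f f' : ℝ → ℝ}
    (hf : ∀ x ∈ uIcc a b, HasDerivAt f (f' x) x) (hf' : ContinuousOn f' (uIcc a b))
    (hfab : f a = f b) (hmean : ∫ x in a..b, f x = 0) :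
    ∫ x in a..b, f x ^ 2 ≤ ((b - a) / (2 * π)) ^ 2 * ∫ x in a..b, f' x ^ 2 := by
  have := integral_norm_sq_le_integral_norm_deriv_sq hab (f := fun x => (f x : ℂ))
    (fun x hx => (hf x hx).ofReal_comp) (Complex.continuous_ofReal.comp_continuousOn hf')
    (by rw [hfab]) (by rw [integral_ofReal, hmean, Complex.ofReal_zero])
  simpa only [Complex.norm_real, Real.norm_eq_abs, sq_abs] using this

/-- The last summand is `w / 3` times the derivative of `P' ^ 3 * P ^ (w - 1)` (at `P = p`,
`P' = d`, `P'' = e`), which integrates to zero over a period. -/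
theorem sq_deriv_rpow_mul_eq (p d e w : ℝ) (hp : 0 < p) :
    (d * (w / 2) * p ^ (w / 2 - 1) * d + p ^ (w / 2) * e) ^ 2
      = e ^ 2 * p ^ w - w * (w - 4) / 12 * (d ^ 4 * p ^ (w - 2))
        + w / 3 * (3 * d ^ 2 * e * p ^ (w - 1) + (w - 1) * d ^ 4 * p ^ (w - 2)) := by
  have hw : p ^ w = (p ^ (w / 2)) ^ 2 := by
    rw [← rpow_natCast, ← rpow_mul hp.le]; norm_num
  rw [rpow_sub_one hp.ne', rpow_sub_one hp.ne', rpow_sub hp, rpow_two, hw]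
  field_simp
  ring

theorem integral_rpow_mul_deriv_eq_zero {a b r : ℝ} {P P' : ℝ → ℝ}
    (hP : ∀ x ∈ uIcc a b, HasDerivAt P (P' x) x) (hP' : ContinuousOn P' (uIcc a b))
    (hpos : ∀ x ∈ uIcc a b, 0 < P x) (hPab : P a = P b) :
    ∫ x in a..b, P x ^ r * P' x = 0 := by
  have hcont : ContinuousOn (· ^ r) (P '' uIcc a b) := by
    rintro _ ⟨x, hx, rfl⟩
    exact (continuousAt_rpow_const _ _ (Or.inl (hpos x hx).ne')).continuousWithinAt
  simpa [hPab] using integral_comp_mul_deriv' hP hP' hcont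

theorem integral_sq_deriv_rpow_mul_deriv {a b w : ℝ} {P P' P'' : ℝ → ℝ}
    (hP : ∀ x ∈ uIcc a b, HasDerivAt P (P' x) x) (hP' : ∀ x ∈ uIcc a b, HasDerivAt P' (P'' x) x)
    (hP'' : ContinuousOn P'' (uIcc a b)) (hpos : ∀ x ∈ uIcc a b, 0 < P x)
    (hPab : P a = P b) (hP'ab : P' a = P' b) :
    ∫ x in a..b, (P' x * (w / 2) * P x ^ (w / 2 - 1) * P' x + P x ^ (w / 2) * P'' x) ^ 2
      = (∫ x in a..b, P'' x ^ 2 * P x ^ w)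
        - w * (w - 4) / 12 * ∫ x in a..b, P' x ^ 4 * P x ^ (w - 2) := by
  have hPc : ContinuousOn P (uIcc a b) := fun x hx => (hP x hx).continuousAt.continuousWithinAt
  have hP'c : ContinuousOn P' (uIcc a b) := fun x hx => (hP' x hx).continuousAt.continuousWithinAt
  have hrpow (r : ℝ) : ContinuousOn (fun x => P x ^ r) (uIcc a b) :=
    hPc.rpow_const fun x hx => Or.inl (hpos x hx).ne'
  have hG : ∀ x ∈ uIcc a b, HasDerivAt (fun x => P' x ^ 3 * P x ^ (w - 1))
      (3 * P' x ^ 2 * P'' x * P x ^ (w - 1) + (w - 1) * P' x ^ 4 * P x ^ (w - 2)) x := by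
    intro x hx
    refine (((hP' x hx).fun_pow 3).mul
      ((hP x hx).rpow_const (p := w - 1) (Or.inl (hpos x hx).ne'))).congr_deriv ?_
    rw [show w - 1 - 1 = w - 2 by ring]
    push_cast
    ring
  have hG' : ∫ x in a..b,
      (3 * P' x ^ 2 * P'' x * P x ^ (w - 1) + (w - 1) * P' x ^ 4 * P x ^ (w - 2)) = 0 := by
    rw [integral_eq_sub_of_hasDerivAt hG, hPab, hP'ab, sub_self]
    exact ContinuousOn.intervalIntegrable (by fun_prop)
  rw [integral_congr fun x hx => sq_deriv_rpow_mul_eq _ _ _ w (hpos x hx), integral_add,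
    integral_sub, integral_const_mul, integral_const_mul, hG', mul_zero, add_zero]
  all_goals exact ContinuousOn.intervalIntegrable (by fun_prop)

theorem integral_deriv_sq_mul_rpow_le {a b w : ℝ} (hab : a < b) {P P' P'' : ℝ → ℝ}
    (hP : ∀ x ∈ uIcc a b, HasDerivAt P (P' x) x) (hP' : ∀ x ∈ uIcc a b, HasDerivAt P' (P'' x) x)
    (hP'' : ContinuousOn P'' (uIcc a b)) (hpos : ∀ x ∈ uIcc a b, 0 < P x)
    (hPab : P a = P b) (hP'ab : P' a = P' b) :
    ∫ x in a..b, P' x ^ 2 * P x ^ w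
      ≤ ((b - a) / (2 * π)) ^ 2 * ((∫ x in a..b, P'' x ^ 2 * P x ^ w)
        - w * (w - 4) / 12 * ∫ x in a..b, P' x ^ 4 * P x ^ (w - 2)) := by
  have hPc : ContinuousOn P (uIcc a b) := fun x hx => (hP x hx).continuousAt.continuousWithinAt
  have hP'c : ContinuousOn P' (uIcc a b) := fun x hx => (hP' x hx).continuousAt.continuousWithinAt
  have hrpow (r : ℝ) : ContinuousOn (fun x => P x ^ r) (uIcc a b) :=
    hPc.rpow_const fun x hx => Or.inl (hpos x hx).ne'
  have hf : ∀ x ∈ uIcc a b, HasDerivAt (fun x => P x ^ (w / 2) * P' x)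
      (P' x * (w / 2) * P x ^ (w / 2 - 1) * P' x + P x ^ (w / 2) * P'' x) x := fun x hx =>
    ((hP x hx).rpow_const (Or.inl (hpos x hx).ne')).mul (hP' x hx)
  have hsq : ∀ x ∈ uIcc a b, (P x ^ (w / 2) * P' x) ^ 2 = P' x ^ 2 * P x ^ w := fun x hx => by
    rw [mul_pow, ← rpow_natCast, ← rpow_mul (hpos x hx).le, mul_comm]
    norm_num
  rw [← integral_congr hsq, ← integral_sq_deriv_rpow_mul_deriv hP hP' hP'' hpos hPab hP'ab]
  exact integral_sq_le_integral_deriv_sq hab hf (by fun_prop) (by rw [hPab, hP'ab])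
    (integral_rpow_mul_deriv_eq_zero hP hP'c hpos hPab)

theorem circle_inequality_quartic_remainder_general
    (ν : ℝ)
    (P : ℝ → ℝ) (hP : ContDiff ℝ 3 P)
    (hpos : ∀ θ : ℝ, 0 < P θ)
    (hper : ∀ θ : ℝ, P (θ + 2*π) = P θ) :
    (∫ θ in (0:ℝ)..(2*π), |deriv P θ|^2 * P θ ^ (1 - ν))
      + ((ν-1)*(ν+3)/12) *
        ∫ θ in (0:ℝ)..(2*π), (|deriv P θ|^4 / P θ^2) * P θ ^ (1 - ν)
    ≤ ∫ θ in (0:ℝ)..(2*π), |deriv (deriv P) θ|^2 * P θ ^ (1 - ν) := by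
  have hd (x : ℝ) : HasDerivAt P (deriv P x) x := (hP.differentiable (by norm_num) x).hasDerivAt
  have hd' (x : ℝ) : HasDerivAt (deriv P) (deriv (deriv P) x) x :=
    ((hP.of_le (by norm_num) : ContDiff ℝ 2 P).differentiable_deriv_two x).hasDerivAt
  have hd'c : Continuous (deriv (deriv P)) := (hP.deriv' (n := 2)).continuous_deriv (by norm_num)
  have hper' : deriv P 0 = deriv P (2 * π) := by
    rw [← zero_add (2 * π), ← deriv_comp_add_const, funext hper]
  have key := integral_deriv_sq_mul_rpow_le (w := 1 - ν) two_pi_pos (fun x _ => hd x)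
    (fun x _ => hd' x) hd'c.continuousOn (fun x _ => hpos x) (by rw [← hper 0, zero_add]) hper'
  rw [sub_zero, div_self two_pi_pos.ne', one_pow, one_mul] at key
  have hquartic (θ : ℝ) : |deriv P θ| ^ 4 / P θ ^ 2 * P θ ^ (1 - ν)
      = deriv P θ ^ 4 * P θ ^ (1 - ν - 2) := by
    rw [Even.pow_abs (by decide), rpow_sub (hpos θ) (1 - ν) 2, rpow_two]
    ring
  simp only [sq_abs, hquartic]
  linarith

/-- Circle inequality with quartic remainder: for a positive
`2π`-periodic `C³` function `P` one has
`∫ |P''|² P^{1-ν} ≥ ∫ |P'|² P^{1-ν} + ((ν-1)(ν+3)/12) ∫ (|P'|⁴/P²) P^{1-ν}`. -/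
theorem circle_inequality_quartic_remainder
    (ν : ℝ) (hν : 2 < ν)
    (P : ℝ → ℝ) (hP : ContDiff ℝ 3 P)
    (hpos : ∀ θ : ℝ, 0 < P θ)
    (hper : ∀ θ : ℝ, P (θ + 2*π) = P θ) :
    (∫ θ in (0:ℝ)..(2*π), |deriv P θ|^2 * P θ ^ (1 - ν))
      + ((ν-1)*(ν+3)/12) *
        ∫ θ in (0:ℝ)..(2*π), (|deriv P θ|^4 / P θ^2) * P θ ^ (1 - ν)
    ≤ ∫ θ in (0:ℝ)..(2*π), |deriv (deriv P) θ|^2 * P θ ^ (1 - ν) :=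
  circle_inequality_quartic_remainder_general ν P hP hpos hper
end
end
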